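/- Let n ≥ 4 and suppose s(x,y) and s(z,x+2) are proper n-sided one-step dice that do not tie. Then s(x,y) beats s(z,x+2). -/
import Mathlib


/-- The number of pairs (i,j) for which the i-th face of die `A` is strictly greater than
the j-th face of die `B`.  (A die is modeled as a multiset of faces, which is equivalent to
a nondecreasing tuple.) -/
def diceWins (A B : Multiset ℕ) : ℕ :=
  (A.map (fun a => (B.filter (fun b => b < a)).card)).sum

/-- Die `A` beats die `B`. -/
def diceBeats (A B : Multiset ℕ) : Prop := diceWins B A < diceWins A B

/-- Dice `A` and `B` tie. -/
def diceTies (A B : Multiset ℕ) : Prop := diceWins A B = diceWins B A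

/-- A proper `n`-sided die: `n` faces, each between `1` and `n`, summing to `n(n+1)/2`. -/
def isProperDie (n : ℕ) (A : Multiset ℕ) : Prop :=
  Multiset.card A = n ∧ (∀ x ∈ A, 1 ≤ x ∧ x ≤ n) ∧ A.sum = n * (n + 1) / 2

/-- The one-step die `s(a,b)`: the multiset `{1,…,n}` with `a` and `b` removed and
`a+1` and `b-1` added. -/
def stepDie (n a b : ℕ) : Multiset ℕ :=
  (Multiset.Icc 1 n - {a, b}) + {a + 1, b - 1}

/-- The conditions on `(a,b)` under which `s(a,b)` is a proper `n`-sided one-step die. -/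
def validStep (n a b : ℕ) : Prop :=
  1 ≤ a ∧ a ≤ n - 1 ∧ 2 ≤ b ∧ b ≤ n ∧ b ≠ a ∧ b ≠ a + 1

instance (n a b : ℕ) : Decidable (validStep n a b) := by unfold validStep; infer_instance

/-- `D` is a proper `n`-sided one-step die. -/
def isOneStepDie (n : ℕ) (D : Multiset ℕ) : Prop :=
  ∃ a b, validStep n a b ∧ D = stepDie n a b

/-- A three-element set of dice is intransitive if it can be labeled so that
`A` beats `B`, `B` beats `C` and `C` beats `A`. -/
def IntransitiveTriple (s : Finset (Multiset ℕ)) : Prop :=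
  ∃ A B C, s = {A, B, C} ∧ diceBeats A B ∧ diceBeats B C ∧ diceBeats C A

/-- A three-element set of dice is transitive if it can be labeled so that
`A` beats `B`, `A` beats `C` and `B` beats `C`. -/
def TransitiveTriple (s : Finset (Multiset ℕ)) : Prop :=
  ∃ A B C, s = {A, B, C} ∧ diceBeats A B ∧ diceBeats A C ∧ diceBeats B C

/-- The set of unordered triples of pairwise distinct proper `n`-sided one-step dice
in which no two of the three dice tie. -/
def tripleSet (n : ℕ) : Set (Finset (Multiset ℕ)) :=
  {s | s.card = 3 ∧ (∀ D ∈ s, isOneStepDie n D) ∧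
    ∀ A ∈ s, ∀ B ∈ s, A ≠ B → ¬ diceTies A B}

lemma diceWins_add_left (A B C : Multiset ℕ) :
    diceWins (A + B) C = diceWins A C + diceWins B C := by simp [diceWins]
lemma diceWins_add_right (A B C : Multiset ℕ) :
    diceWins A (B + C) = diceWins A B + diceWins A C := by
  unfold diceWins
  rw [← Multiset.sum_map_add]
  congr 1
  apply Multiset.map_congr rfl
  intro a _
  rw [Multiset.filter_add, Multiset.card_add]
lemma diceWins_singleton (s t : ℕ) :
    diceWins {s} {t} = if t < s then 1 else 0 := by
  simp [diceWins, Multiset.filter_singleton]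
  split_ifs <;> simp
lemma diceWins_singleton_Icc (n t : ℕ) (ht1 : 1 ≤ t) (ht2 : t ≤ n) :
    diceWins {t} (Multiset.Icc 1 n) = t - 1 := by
  unfold diceWins
  rw [Multiset.map_singleton, Multiset.sum_singleton]
  rw [show Multiset.Icc (1:ℕ) n = (Finset.Icc 1 n).val from rfl, ← Finset.filter_val]
  rw [show ((Finset.Icc 1 n).filter (fun b => b < t)).val.card
      = ((Finset.Icc 1 n).filter (fun b => b < t)).card from rfl]
  rw [show (Finset.Icc 1 n).filter (fun b => b < t) = Finset.Icc 1 (t - 1) by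
    ext b; simp [Finset.mem_Icc, Finset.mem_filter]; omega]
  rw [Nat.card_Icc]; omega
lemma diceWins_Icc_singleton (n t : ℕ) :
    diceWins (Multiset.Icc 1 n) {t} = n - t := by
  unfold diceWins
  rw [show Multiset.Icc (1:ℕ) n = (Finset.Icc 1 n).val from rfl]
  rw [show ((Finset.Icc 1 n).val.map
      (fun a => (Multiset.filter (fun b => b < a) {t}).card)).sum
      = ∑ a ∈ Finset.Icc 1 n, (Multiset.filter (fun b => b < a) ({t}:Multiset ℕ)).card
      from rfl]
  have h : ∀ a ∈ Finset.Icc 1 n,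
      (Multiset.filter (fun b => b < a) ({t}:Multiset ℕ)).card = if t < a then 1 else 0 := by
    intro a _
    rw [Multiset.filter_singleton]
    split_ifs <;> simp
  rw [Finset.sum_congr rfl h, Finset.sum_boole]
  rw [show (Finset.Icc 1 n).filter (fun x => t < x) = Finset.Icc (t+1) n by
    ext b; simp [Finset.mem_Icc, Finset.mem_filter]; omega]
  rw [Nat.card_Icc]; simp
lemma step_add (n a b : ℕ) (h : validStep n a b) :
    stepDie n a b + ({a, b} : Multiset ℕ) = Multiset.Icc 1 n + {a + 1, b - 1} := by
  obtain ⟨ha1, ha2, hb1, hb2, hba, hba1⟩ := h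
  have hle : ({a, b} : Multiset ℕ) ≤ Multiset.Icc 1 n := by
    rw [Multiset.le_iff_count]
    intro c
    have hnd : (Multiset.Icc (1:ℕ) n).Nodup := (Finset.Icc 1 n).nodup
    by_cases hca : c = a
    · subst hca
      have hm : c ∈ Multiset.Icc (1:ℕ) n := by rw [Multiset.mem_Icc]; omega
      rw [Multiset.count_eq_one_of_mem hnd hm]
      simp [Multiset.count_cons, Multiset.count_singleton, Ne.symm hba]
    · by_cases hcb : c = b
      · subst hcb
        have hm : c ∈ Multiset.Icc (1:ℕ) n := by rw [Multiset.mem_Icc]; omega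
        rw [Multiset.count_eq_one_of_mem hnd hm]
        simp [Multiset.count_cons, Multiset.count_singleton, hca]
      · simp [Multiset.count_cons, Multiset.count_singleton, hca, hcb]
  unfold stepDie
  rw [add_right_comm, tsub_add_cancel_of_le hle]

def sg (s t : ℕ) : ℤ := (if t < s then 1 else 0) - (if s < t then 1 else 0)
def dW (A B : Multiset ℕ) : ℤ := (diceWins A B : ℤ) - (diceWins B A : ℤ)

lemma dW_add_left (A B C : Multiset ℕ) : dW (A + B) C = dW A C + dW B C := by
  unfold dW; rw [diceWins_add_left, diceWins_add_right]; push_cast; ring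
lemma dW_add_right (A B C : Multiset ℕ) : dW A (B + C) = dW A B + dW A C := by
  unfold dW; rw [diceWins_add_right, diceWins_add_left]; push_cast; ring
lemma dW_pair_left (a b : ℕ) (C : Multiset ℕ) :
    dW ({a, b} : Multiset ℕ) C = dW {a} C + dW {b} C := by
  rw [show ({a, b} : Multiset ℕ) = {a} + {b} from rfl, dW_add_left]
lemma dW_pair_right (a b : ℕ) (C : Multiset ℕ) :
    dW C ({a, b} : Multiset ℕ) = dW C {a} + dW C {b} := by
  rw [show ({a, b} : Multiset ℕ) = {a} + {b} from rfl, dW_add_right]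
lemma dW_singleton (s t : ℕ) : dW {s} {t} = sg s t := by
  unfold dW sg; rw [diceWins_singleton, diceWins_singleton]
  split_ifs <;> norm_num
lemma dW_single_Icc (n t : ℕ) (ht1 : 1 ≤ t) (ht2 : t ≤ n) :
    dW {t} (Multiset.Icc 1 n) = 2 * (t:ℤ) - n - 1 := by
  unfold dW
  rw [diceWins_singleton_Icc n t ht1 ht2, diceWins_Icc_singleton n t]
  omega
lemma dW_Icc_single (n t : ℕ) (ht1 : 1 ≤ t) (ht2 : t ≤ n) :
    dW (Multiset.Icc 1 n) {t} = (n:ℤ) + 1 - 2 * t := by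
  unfold dW
  rw [diceWins_singleton_Icc n t ht1 ht2, diceWins_Icc_singleton n t]
  omega

lemma blockD (s z : ℕ) :
    sg s (z + 1) - sg s z
      = (if s = z then (-1:ℤ) else 0) + (if s = z + 1 then (-1:ℤ) else 0) := by
  unfold sg; split_ifs <;> omega
lemma blockG (y t : ℕ) (hy : 1 ≤ y) :
    sg y t - sg (y - 1) t
      = (if y = t then (1:ℤ) else 0) + (if y = t + 1 then (1:ℤ) else 0) := by
  unfold sg; split_ifs <;> omega

lemma sg_arith (x y z : ℕ) (hx : 1 ≤ x) (hy : 2 ≤ y)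
    (hyx1 : y ≠ x + 1) (S : ℤ)
    (hS : S = sg (x+1) (z+1) + sg (x+1) (x+1) + sg (y-1) (z+1) + sg (y-1) (x+1)
            - (sg x (z+1) + sg x (x+1) + sg y (z+1) + sg y (x+1))
            - (sg (x+1) z + sg (x+1) (x+2) + sg (y-1) z + sg (y-1) (x+2))
            + (sg x z + sg x (x+2) + sg y z + sg y (x+2)))
    (hne : S ≠ 0) : 0 < S := by
  have d1 := blockD (x+1) z
  have d2 := blockD x z
  have d3 := blockD (y-1) z
  have d4 := blockD y z
  have g1 := blockG y (x+1) (by omega)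
  have g2 := blockG y (x+2) (by omega)
  have c1 : sg (x+1) (x+1) = 0 := by unfold sg; simp
  have c2 : sg (x+1) (x+2) = -1 := by
    unfold sg; rw [if_neg (by omega), if_pos (by omega)]; norm_num
  have c3 : sg x (x+1) = -1 := by
    unfold sg; rw [if_neg (by omega), if_pos (by omega)]; norm_num
  have c4 : sg x (x+2) = -1 := by
    unfold sg; rw [if_neg (by omega), if_pos (by omega)]; norm_num
  -- also need sg (y-1) (x+1) and sg (y-1) (x+2) relations: from g1 g2 as atoms.
  have qa : (if x + 1 = z + 1 then (-1:ℤ) else 0) = (if x = z then (-1:ℤ) else 0) := by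
    split_ifs <;> omega
  have qb : (if y - 1 = z + 1 then (-1:ℤ) else 0) = (if y = z + 2 then (-1:ℤ) else 0) := by
    split_ifs <;> omega
  have qc : (if y - 1 = z then (-1:ℤ) else 0) = (if y = z + 1 then (-1:ℤ) else 0) := by
    split_ifs <;> omega
  have qd : (if y = x + 1 then (1:ℤ) else 0) = 0 := if_neg hyx1
  have qe : (if y = x + 1 + 1 then (1:ℤ) else 0) = (if y = x + 2 then (1:ℤ) else 0) := by
    split_ifs <;> omega
  have qf : (if y = x + 2 + 1 then (1:ℤ) else 0) = (if y = x + 3 then (1:ℤ) else 0) := by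
    split_ifs <;> omega
  have qg : (if x = z + 1 then (-1:ℤ) else 0) = -(if x = z + 1 then (1:ℤ) else 0) := by
    split_ifs <;> ring
  have qh : (if y = z then (-1:ℤ) else 0) = -(if y = z then (1:ℤ) else 0) := by
    split_ifs <;> ring
  have qi : (if x = z then (-1:ℤ) else 0) = -(if x = z then (1:ℤ) else 0) := by
    split_ifs <;> ring
  have qj : (if y = z + 1 then (-1:ℤ) else 0) = -(if y = z + 1 then (1:ℤ) else 0) := by
    split_ifs <;> ring
  have hS' : S = 1 + (if y = x + 3 then (1:ℤ) else 0)
      - (if x + 1 = z then (-1:ℤ) else 0) * (-1)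
      + (if x = z + 1 then (1:ℤ) else 0)
      - (if y = z + 2 then (-1:ℤ) else 0) * (-1)
      + (if y = z then (1:ℤ) else 0) := by
    rw [hS]
    linarith [d1, d2, d3, d4, g1, g2, c1, c2, c3, c4, qa, qb, qc, qd, qe, qf, qg, qh, qi, qj]
  rw [hS'] at hne ⊢
  split_ifs at hne ⊢ <;> omega

theorem beats_form_two (n x y z : ℕ) (hn : 4 ≤ n)
    (h1 : validStep n x y) (h2 : validStep n z (x + 2))
    (hnotie : ¬ diceTies (stepDie n x y) (stepDie n z (x + 2))) :
    diceBeats (stepDie n x y) (stepDie n z (x + 2)) := by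
  obtain ⟨hx1, hx2, hy1, hy2, hyx, hyx1⟩ := h1
  obtain ⟨hz1, hz2, hx2', hx2n, hxz, hxz1⟩ := h2
  set A := stepDie n x y with hAdef
  set B := stepDie n z (x + 2) with hBdef
  set U := Multiset.Icc 1 n with hUdef
  have hA : A + ({x, y} : Multiset ℕ) = U + {x + 1, y - 1} :=
    step_add n x y ⟨hx1, hx2, hy1, hy2, hyx, hyx1⟩
  have hB : B + ({z, x + 2} : Multiset ℕ) = U + {z + 1, x + 1} := by
    have h := step_add n z (x + 2) ⟨hz1, hz2, hx2', hx2n, hxz, hxz1⟩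
    rwa [show x + 2 - 1 = x + 1 from rfl] at h
  have keyA : ∀ C, dW A C = dW U C + dW ({x + 1, y - 1} : Multiset ℕ) C
      - dW ({x, y} : Multiset ℕ) C := by
    intro C
    have h := congrArg (fun M => dW M C) hA
    simp only [dW_add_left] at h
    linarith
  have eB : dW A B = dW A U + dW A ({z + 1, x + 1} : Multiset ℕ)
      - dW A ({z, x + 2} : Multiset ℕ) := by
    have h := congrArg (fun M => dW A M) hB
    simp only [dW_add_right] at h
    linarith
  have eU := keyA U
  have eQ' := keyA ({z + 1, x + 1} : Multiset ℕ)
  have eQ := keyA ({z, x + 2} : Multiset ℕ)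
  -- expand pairs into singletons
  simp only [dW_pair_left, dW_pair_right, dW_singleton] at eU eQ' eQ eB
  -- numeric values of singleton-vs-Icc terms
  rw [dW_single_Icc n (x+1) (by omega) (by omega),
      dW_single_Icc n (y-1) (by omega) (by omega),
      dW_single_Icc n x (by omega) (by omega),
      dW_single_Icc n y (by omega) (by omega)] at eU
  rw [show dW U U = 0 from sub_self _] at eU
  rw [dW_Icc_single n (z+1) (by omega) (by omega),
      dW_Icc_single n (x+1) (by omega) (by omega)] at eQ'
  rw [dW_Icc_single n z (by omega) (by omega),
      dW_Icc_single n (x+2) (by omega) (by omega)] at eQ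
  have hcast : ((y - 1 : ℕ) : ℤ) = (y : ℤ) - 1 := by omega
  rw [hcast] at eU
  push_cast at eU eQ' eQ
  have hS : dW A B = sg (x+1) (z+1) + sg (x+1) (x+1) + sg (y-1) (z+1) + sg (y-1) (x+1)
            - (sg x (z+1) + sg x (x+1) + sg y (z+1) + sg y (x+1))
            - (sg (x+1) z + sg (x+1) (x+2) + sg (y-1) z + sg (y-1) (x+2))
            + (sg x z + sg x (x+2) + sg y z + sg y (x+2)) := by
    rw [eB]; linarith [eU, eQ', eQ]
  have hne : dW A B ≠ 0 := by
    intro h0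
    apply hnotie
    unfold diceTies
    unfold dW at h0
    omega
  have hpos : 0 < dW A B := sg_arith x y z hx1 hy1 hyx1 _ hS (by omega)
  unfold diceBeats
  unfold dW at hpos
  omega
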